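/- Under the setting of the kernel Rademacher bound, for the multi-class kernel hypothesis class G_{K,p} = { x ↦ (⟨w₁,Φ(x)⟩, …, ⟨w_K,Φ(x)⟩) : (Σ_l ‖w_l‖^p)^{1/p} ≤ Λ } with K(x,x) ≤ r² for all x, the multi-class empirical Rademacher complexity E_σ[sup_g (1/m) Σ_{i=1}^m Σ_{k=1}^K σ_{ik} g_k(xᵢ)] is bounded by K √(r²Λ²/m). -/

import Mathlib

open MeasureTheory ProbabilityTheory
open scoped BigOperators RealInnerProductSpace


lemma rademacher_ae {Ω : Type*} [MeasurableSpace Ω] (μ : Measure Ω) [IsProbabilityMeasure μ]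
    {s : Ω → ℝ} (hmeas : Measurable s)
    (h1 : μ {ω | s ω = 1} = 1 / 2) (h2 : μ {ω | s ω = -1} = 1 / 2) :
    ∀ᵐ ω ∂μ, s ω = 1 ∨ s ω = -1 := by
  have hA : MeasurableSet {ω | s ω = 1} := hmeas (measurableSet_singleton 1)
  have hB : MeasurableSet {ω | s ω = -1} := hmeas (measurableSet_singleton (-1))
  have hd : Disjoint {ω | s ω = 1} {ω | s ω = -1} := by
    rw [Set.disjoint_left]; intro ω hω1 hω2
    simp only [Set.mem_setOf_eq] at hω1 hω2; rw [hω1] at hω2; norm_num at hω2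
  have hu : μ ({ω | s ω = 1} ∪ {ω | s ω = -1}) = 1 := by
    rw [measure_union hd hB, h1, h2]
    rw [ENNReal.div_add_div_same, one_add_one_eq_two,
      ENNReal.div_self two_ne_zero ENNReal.ofNat_ne_top]
  have h0 := (prob_compl_eq_zero_iff (hA.union hB)).2 hu
  have hset : {a | ¬(s a = 1 ∨ s a = -1)} = ({ω | s ω = 1} ∪ {ω | s ω = -1})ᶜ := by
    ext ω; simp [Set.mem_setOf_eq]
  rw [ae_iff, hset]; exact h0

lemma rademacher_mean {Ω : Type*} [MeasurableSpace Ω] (μ : Measure Ω) [IsProbabilityMeasure μ]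
    {s : Ω → ℝ} (hmeas : Measurable s)
    (h1 : μ {ω | s ω = 1} = 1 / 2) (h2 : μ {ω | s ω = -1} = 1 / 2) :
    ∫ ω, s ω ∂μ = 0 := by
  have hA : MeasurableSet {ω | s ω = 1} := hmeas (measurableSet_singleton 1)
  have hB : MeasurableSet {ω | s ω = -1} := hmeas (measurableSet_singleton (-1))
  have hae := rademacher_ae μ hmeas h1 h2
  have heq : s =ᵐ[μ] fun ω =>
      Set.indicator {ω | s ω = 1} (fun _ => (1:ℝ)) ω
      + Set.indicator {ω | s ω = -1} (fun _ => (-1:ℝ)) ω := by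
    filter_upwards [hae] with ω hω
    rcases hω with h | h <;>
      norm_num [Set.indicator_apply, Set.mem_setOf_eq, h]
  rw [integral_congr_ae heq, integral_add ((integrable_const _).indicator hA)
    ((integrable_const _).indicator hB), integral_indicator_const _ hA,
    integral_indicator_const _ hB, measureReal_def, measureReal_def, h1, h2]
  norm_num

/-- Multi-class kernel empirical Rademacher complexity bound. -/
theorem multiclass_kernel_rademacher_bound {X : Type*} {H : Type*}
    [NormedAddCommGroup H] [InnerProductSpace ℝ H]
    {Ω : Type*} [MeasurableSpace Ω] (μ : Measure Ω) [IsProbabilityMeasure μ]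
    (m K : ℕ) (hm : 0 < m) (hK : 0 < K)
    (σ : Fin m × Fin K → Ω → ℝ)
    (hmeas : ∀ ik, Measurable (σ ik))
    (hindep : iIndepFun σ μ)
    (hdist : ∀ ik, μ {ω | σ ik ω = 1} = 1 / 2 ∧ μ {ω | σ ik ω = -1} = 1 / 2)
    (Φ : X → H) (r Λ : ℝ) (hr : 0 < r) (hΛ : 0 < Λ) (p : ℝ) (hp : 1 ≤ p)
    (hker : ∀ x : X, ⟪Φ x, Φ x⟫ ≤ r ^ 2)
    (x : Fin m → X) :
    (∫ ω, (⨆ W : {W : Fin K → H // (∑ l, ‖W l‖ ^ p) ^ (1 / p) ≤ Λ},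
        (1 / (m : ℝ)) * ∑ i : Fin m, ∑ k : Fin K,
          σ (i, k) ω * ⟪(W : Fin K → H) k, Φ (x i)⟫) ∂μ)
      ≤ K * Real.sqrt (r ^ 2 * Λ ^ 2 / m) := by
  have hp0 : 0 < p := lt_of_lt_of_le one_pos hp
  -- basic facts about the Rademacher variables
  have hae : ∀ ik, ∀ᵐ ω ∂μ, σ ik ω = 1 ∨ σ ik ω = -1 := fun ik =>
    rademacher_ae μ (hmeas ik) (hdist ik).1 (hdist ik).2
  have habs : ∀ ik, ∀ᵐ ω ∂μ, |σ ik ω| ≤ 1 := by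
    intro ik; filter_upwards [hae ik] with ω hω
    rcases hω with h | h <;> simp [h]
  have hInt : ∀ ik, Integrable (σ ik) μ := by
    intro ik
    refine ⟨(hmeas ik).aestronglyMeasurable, ?_⟩
    exact HasFiniteIntegral.of_bounded (C := 1)
      ((habs ik).mono fun ω h => by simpa [Real.norm_eq_abs] using h)
  have hIntmul : ∀ a b, Integrable (fun ω => σ a ω * σ b ω) μ := by
    intro a b
    refine ⟨((hmeas a).mul (hmeas b)).aestronglyMeasurable, ?_⟩
    refine HasFiniteIntegral.of_bounded (C := 1) ?_
    filter_upwards [habs a, habs b] with ω h1 h2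
    rw [Real.norm_eq_abs, abs_mul]
    exact mul_le_one₀ h1 (abs_nonneg _) h2
  have hmean : ∀ ik, ∫ ω, σ ik ω ∂μ = 0 := fun ik =>
    rademacher_mean μ (hmeas ik) (hdist ik).1 (hdist ik).2
  have hsq : ∀ ik, ∫ ω, σ ik ω * σ ik ω ∂μ = 1 := by
    intro ik
    have heq : (fun ω => σ ik ω * σ ik ω) =ᵐ[μ] fun _ => (1:ℝ) := by
      filter_upwards [hae ik] with ω hω
      rcases hω with h | h <;> simp [h]
    rw [integral_congr_ae heq]; simp
  have hcov : ∀ (a b : Fin m × Fin K), a ≠ b → ∫ ω, σ a ω * σ b ω ∂μ = 0 := by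
    intro a b hab
    have h := IndepFun.integral_mul_eq_mul_integral (hindep.indepFun hab) (hInt a).1 (hInt b).1
    have h2 : ∫ ω, σ a ω * σ b ω ∂μ = (∫ ω, σ a ω ∂μ) * ∫ ω, σ b ω ∂μ := h
    rw [h2, hmean a, hmean b, mul_zero]
  -- the vectors v k ω and the scalar representation S of ‖v k ω‖²
  set v : Fin K → Ω → H := fun k ω => ∑ i, σ (i, k) ω • Φ (x i) with hv
  set S : Fin K → Ω → ℝ := fun k ω =>
    ∑ i, ∑ j, (σ (i, k) ω * σ (j, k) ω) * ⟪Φ (x i), Φ (x j)⟫ with hS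
  have hid : ∀ k ω, ‖v k ω‖ ^ 2 = S k ω := by
    intro k ω
    rw [← real_inner_self_eq_norm_sq]
    simp only [hv, hS, sum_inner, inner_sum, real_inner_smul_left, real_inner_smul_right]
    refine Finset.sum_congr rfl fun i _ => Finset.sum_congr rfl fun j _ => by rw [real_inner_comm (Φ (x j))]; ring
  have hSmeas : ∀ k, Measurable (S k) := by
    intro k
    refine Finset.measurable_sum _ fun i _ => Finset.measurable_sum _ fun j _ => ?_
    exact (((hmeas (i,k)).mul (hmeas (j,k))).mul_const _)
  have hnormmeas : ∀ k, Measurable (fun ω => ‖v k ω‖) := by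
    intro k
    have : (fun ω => ‖v k ω‖) = fun ω => Real.sqrt (S k ω) := by
      funext ω; rw [← hid k ω, Real.sqrt_sq (norm_nonneg _)]
    rw [this]
    exact (hSmeas k).sqrt
  have hnormbd : ∀ k, ∀ᵐ ω ∂μ, ‖v k ω‖ ≤ ∑ i, ‖Φ (x i)‖ := by
    intro k
    have h := ae_all_iff.2 habs
    filter_upwards [h] with ω hω
    calc ‖v k ω‖ ≤ ∑ i, ‖σ (i,k) ω • Φ (x i)‖ := norm_sum_le _ _
      _ ≤ ∑ i, ‖Φ (x i)‖ := by
          refine Finset.sum_le_sum fun i _ => ?_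
          rw [norm_smul, Real.norm_eq_abs]
          exact mul_le_of_le_one_left (norm_nonneg _) (hω (i,k))
  have hMem2 : ∀ k, MemLp (fun ω => ‖v k ω‖) 2 μ := by
    intro k
    refine MemLp.of_bound (hnormmeas k).aestronglyMeasurable (∑ i, ‖Φ (x i)‖) ?_
    filter_upwards [hnormbd k] with ω hω
    simpa [Real.norm_eq_abs, abs_of_nonneg (norm_nonneg _)] using hω
  have hIntnorm : ∀ k, Integrable (fun ω => ‖v k ω‖) μ := fun k =>
    (hMem2 k).integrable one_le_two
  -- second moment bound
  have hSint : ∀ k, ∫ ω, S k ω ∂μ ≤ m * r ^ 2 := by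
    intro k
    have hint : ∀ (i j : Fin m),
        Integrable (fun ω => (σ (i,k) ω * σ (j,k) ω) * ⟪Φ (x i), Φ (x j)⟫) μ :=
      fun i j => (hIntmul (i,k) (j,k)).mul_const _
    have h1 : ∫ ω, S k ω ∂μ = ∑ i, ∑ j,
        (∫ ω, σ (i,k) ω * σ (j,k) ω ∂μ) * ⟪Φ (x i), Φ (x j)⟫ := by
      rw [hS]
      rw [integral_finset_sum _ (fun i _ => integrable_finset_sum _ (fun j _ => hint i j))]
      refine Finset.sum_congr rfl fun i _ => ?_
      rw [integral_finset_sum _ (fun j _ => hint i j)]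
      exact Finset.sum_congr rfl fun j _ => integral_mul_const _ _
    rw [h1]
    have h2 : ∀ i : Fin m, ∑ j,
        (∫ ω, σ (i,k) ω * σ (j,k) ω ∂μ) * ⟪Φ (x i), Φ (x j)⟫ ≤ r ^ 2 := by
      intro i
      rw [Finset.sum_eq_single i]
      · rw [hsq (i,k), one_mul]; exact hker (x i)
      · intro j _ hji
        rw [hcov (i,k) (j,k) (by simp [Ne.symm hji]), zero_mul]
      · simp
    calc ∑ i, ∑ j, (∫ ω, σ (i,k) ω * σ (j,k) ω ∂μ) * ⟪Φ (x i), Φ (x j)⟫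
        ≤ ∑ _i : Fin m, r ^ 2 := Finset.sum_le_sum fun i _ => h2 i
      _ = m * r ^ 2 := by simp [mul_comm]
  -- first moment bound via Jensen (variance nonneg)
  have hfirst : ∀ k, ∫ ω, ‖v k ω‖ ∂μ ≤ Real.sqrt (m * r ^ 2) := by
    intro k
    have hvar := variance_nonneg (fun ω => ‖v k ω‖) μ
    rw [variance_eq_sub (hMem2 k)] at hvar
    have hsq2 : (∫ ω, ‖v k ω‖ ∂μ) ^ 2 ≤ ∫ ω, S k ω ∂μ := by
      have heq2 : ∫ ω, ((fun ω => ‖v k ω‖) ^ 2) ω ∂μ = ∫ ω, S k ω ∂μ := by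
        refine integral_congr_ae (Filter.Eventually.of_forall fun ω => ?_)
        simp [hid k ω]
      have := hvar
      rw [heq2] at this
      linarith
    have h3 : 0 ≤ ∫ ω, ‖v k ω‖ ∂μ := integral_nonneg fun ω => norm_nonneg _
    exact (Real.le_sqrt h3 (by positivity)).mpr (hsq2.trans (hSint k))
  -- pointwise bound on the supremum
  have hW0 : (∑ l : Fin K, ‖(0 : Fin K → H) l‖ ^ p) ^ (1 / p) ≤ Λ := by
    rw [show (∑ l : Fin K, ‖(0 : Fin K → H) l‖ ^ p) = 0 by
      simp [Real.zero_rpow hp0.ne']]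
    rw [Real.zero_rpow (one_div_ne_zero hp0.ne')]
    exact hΛ.le
  haveI hne : Nonempty {W : Fin K → H // (∑ l, ‖W l‖ ^ p) ^ (1 / p) ≤ Λ} := ⟨⟨0, hW0⟩⟩
  have hWk : ∀ (W : {W : Fin K → H // (∑ l, ‖W l‖ ^ p) ^ (1 / p) ≤ Λ}) (k : Fin K),
      ‖(W : Fin K → H) k‖ ≤ Λ := by
    intro W k
    have h0 : 0 ≤ ∑ l, ‖(W : Fin K → H) l‖ ^ p :=
      Finset.sum_nonneg fun l _ => Real.rpow_nonneg (norm_nonneg _) _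
    have hsum : ∑ l, ‖(W : Fin K → H) l‖ ^ p ≤ Λ ^ p := by
      have h := Real.rpow_le_rpow (Real.rpow_nonneg h0 _) W.2 hp0.le
      rwa [← Real.rpow_mul h0, one_div_mul_cancel hp0.ne', Real.rpow_one] at h
    have h1 : ‖(W : Fin K → H) k‖ ^ p ≤ Λ ^ p :=
      le_trans (Finset.single_le_sum
        (fun l _ => Real.rpow_nonneg (norm_nonneg _) _) (Finset.mem_univ k)) hsum
    exact (Real.rpow_le_rpow_iff (norm_nonneg _) hΛ.le hp0).1 h1
  have hterm : ∀ ω (W : {W : Fin K → H // (∑ l, ‖W l‖ ^ p) ^ (1 / p) ≤ Λ}),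
      (1 / (m : ℝ)) * ∑ i : Fin m, ∑ k : Fin K,
          σ (i, k) ω * ⟪(W : Fin K → H) k, Φ (x i)⟫
        ≤ (1 / (m : ℝ)) * ∑ k, Λ * ‖v k ω‖ := by
    intro ω W
    refine mul_le_mul_of_nonneg_left ?_ (by positivity)
    rw [Finset.sum_comm]
    refine Finset.sum_le_sum fun k _ => ?_
    have h1 : ∑ i, σ (i, k) ω * ⟪(W : Fin K → H) k, Φ (x i)⟫
        = ⟪(W : Fin K → H) k, v k ω⟫ := by
      simp only [hv, inner_sum, real_inner_smul_right]
    rw [h1]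
    calc ⟪(W : Fin K → H) k, v k ω⟫ ≤ ‖(W : Fin K → H) k‖ * ‖v k ω‖ :=
          real_inner_le_norm _ _
      _ ≤ Λ * ‖v k ω‖ := mul_le_mul_of_nonneg_right (hWk W k) (norm_nonneg _)
  have hgint : Integrable (fun ω => (1 / (m : ℝ)) * ∑ k, Λ * ‖v k ω‖) μ :=
    (integrable_finset_sum _ fun k _ => (hIntnorm k).const_mul Λ).const_mul _
  have hsup_le : ∀ ω, (⨆ W : {W : Fin K → H // (∑ l, ‖W l‖ ^ p) ^ (1 / p) ≤ Λ},
      (1 / (m : ℝ)) * ∑ i : Fin m, ∑ k : Fin K,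
        σ (i, k) ω * ⟪(W : Fin K → H) k, Φ (x i)⟫)
      ≤ (1 / (m : ℝ)) * ∑ k, Λ * ‖v k ω‖ := fun ω => ciSup_le (hterm ω)
  have hsup_nonneg : ∀ ω, 0 ≤ ⨆ W : {W : Fin K → H // (∑ l, ‖W l‖ ^ p) ^ (1 / p) ≤ Λ},
      (1 / (m : ℝ)) * ∑ i : Fin m, ∑ k : Fin K,
        σ (i, k) ω * ⟪(W : Fin K → H) k, Φ (x i)⟫ := by
    intro ω
    have hbdd : BddAbove (Set.range fun W : {W : Fin K → H //
        (∑ l, ‖W l‖ ^ p) ^ (1 / p) ≤ Λ} =>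
        (1 / (m : ℝ)) * ∑ i : Fin m, ∑ k : Fin K,
          σ (i, k) ω * ⟪(W : Fin K → H) k, Φ (x i)⟫) := by
      refine ⟨(1 / (m : ℝ)) * ∑ k, Λ * ‖v k ω‖, ?_⟩
      rintro _ ⟨W, rfl⟩
      exact hterm ω W
    have h0 : (1 / (m : ℝ)) * ∑ i : Fin m, ∑ k : Fin K,
        σ (i, k) ω * ⟪((⟨0, hW0⟩ : {W : Fin K → H //
          (∑ l, ‖W l‖ ^ p) ^ (1 / p) ≤ Λ}) : Fin K → H) k, Φ (x i)⟫ = 0 := by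
      simp
    calc (0:ℝ) = _ := h0.symm
      _ ≤ _ := le_ciSup hbdd _
  have hm0 : (0:ℝ) < m := by exact_mod_cast hm
  calc (∫ ω, (⨆ W : {W : Fin K → H // (∑ l, ‖W l‖ ^ p) ^ (1 / p) ≤ Λ},
        (1 / (m : ℝ)) * ∑ i : Fin m, ∑ k : Fin K,
          σ (i, k) ω * ⟪(W : Fin K → H) k, Φ (x i)⟫) ∂μ)
      ≤ ∫ ω, (1 / (m : ℝ)) * ∑ k, Λ * ‖v k ω‖ ∂μ :=
        integral_mono_of_nonneg (Filter.Eventually.of_forall hsup_nonneg) hgint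
          (Filter.Eventually.of_forall hsup_le)
    _ = (1 / (m : ℝ)) * ∑ k, Λ * ∫ ω, ‖v k ω‖ ∂μ := by
        rw [integral_const_mul]
        congr 1
        rw [integral_finset_sum _ fun k _ => (hIntnorm k).const_mul Λ]
        exact Finset.sum_congr rfl fun k _ => integral_const_mul _ _
    _ ≤ (1 / (m : ℝ)) * ∑ _k : Fin K, Λ * Real.sqrt (m * r ^ 2) := by
        refine mul_le_mul_of_nonneg_left (Finset.sum_le_sum fun k _ =>
          mul_le_mul_of_nonneg_left (hfirst k) hΛ.le) (by positivity)
    _ = (1 / (m : ℝ)) * ((K : ℝ) * (Λ * Real.sqrt (m * r ^ 2))) := by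
        rw [Finset.sum_const, Finset.card_univ, Fintype.card_fin, nsmul_eq_mul]
    _ = K * Real.sqrt (r ^ 2 * Λ ^ 2 / m) := by
        have h1 : Real.sqrt ((m : ℝ) * r ^ 2) = Real.sqrt m * r := by
          rw [Real.sqrt_mul hm0.le, Real.sqrt_sq hr.le]
        have h2 : Real.sqrt (r ^ 2 * Λ ^ 2 / m) = r * Λ * Real.sqrt m / m := by
          have hs : Real.sqrt m * Real.sqrt m = (m : ℝ) := Real.mul_self_sqrt hm0.le
          have he : (r * Λ * Real.sqrt m / m) ^ 2 = r ^ 2 * Λ ^ 2 / m := by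
            rw [div_pow, mul_pow, Real.sq_sqrt hm0.le, sq (m : ℝ), mul_div_assoc,
              div_mul_cancel_left₀ hm0.ne', mul_pow, div_eq_mul_inv]
          rw [← he, Real.sqrt_sq (by positivity)]
        rw [h1, h2]
        ring
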